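/- arXiv:2504.15000 — 8 statements merged into one kernel-verified Lean document; each statement's English description precedes it below -/
import Mathlib

section
/- Let 1 ≤ t ≤ 3 be a real number. Then there exists a constant C > 0, depending only on t, such that for all real numbers a, b > 0: |(a+b)^t − a^t − b^t − t·a·b·(a^{t-2} + b^{t-2})| ≤ C·a·b^{t-1} whenever a ≥ b, and |(a+b)^t − a^t − b^t − t·a·b·(a^{t-2} + b^{t-2})| ≤ C·b·a^{t-1} whenever a ≤ b. -/
open Real Set

private lemma pow_base_bound {t a s : ℝ} (ht1 : 1 ≤ t) (ht3 : t ≤ 3) (ha : 0 < a)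
    (hs : 0 ≤ s) (hsa : s ≤ a) : (a + s) ^ (t - 2) ≤ 2 * a ^ (t - 2) := by
  rcases le_or_gt t 2 with h | h
  · calc (a + s) ^ (t - 2) ≤ a ^ (t - 2) :=
          Real.rpow_le_rpow_of_nonpos ha (by linarith) (by linarith)
      _ ≤ 2 * a ^ (t - 2) := by nlinarith [Real.rpow_pos_of_pos ha (t - 2)]
  · calc (a + s) ^ (t - 2) ≤ (2 * a) ^ (t - 2) :=
          Real.rpow_le_rpow (by linarith) (by linarith) (by linarith)
      _ = 2 ^ (t - 2) * a ^ (t - 2) := Real.mul_rpow (by norm_num) ha.le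
      _ ≤ 2 ^ (1 : ℝ) * a ^ (t - 2) :=
          mul_le_mul_of_nonneg_right
            (Real.rpow_le_rpow_of_exponent_le one_le_two (by linarith))
            (Real.rpow_nonneg ha.le _)
      _ = 2 * a ^ (t - 2) := by rw [Real.rpow_one]

private lemma step1 {t a b : ℝ} (ht1 : 1 ≤ t) (ht3 : t ≤ 3) (ha : 0 < a) (hb : 0 < b)
    (hba : b ≤ a) : ∀ s ∈ Icc (0:ℝ) b,
    |(a + s) ^ (t - 1) - a ^ (t - 1)| ≤ 4 * a ^ (t - 2) * s := by
  intro s hs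
  have key : ∀ x ∈ Icc (0:ℝ) b, HasDerivWithinAt (fun u => (a + u) ^ (t - 1))
      ((t - 1) * (a + x) ^ (t - 2)) (Icc (0:ℝ) b) x := by
    intro x hx
    have hax : a + x ≠ 0 := by have := hx.1; positivity
    have h1 : HasDerivAt (fun u : ℝ => a + u) 1 x := (hasDerivAt_id x).const_add a
    have h2 := (Real.hasDerivAt_rpow_const (p := t - 1) (Or.inl hax)).comp x h1
    have : (t - 1) * (a + x) ^ (t - 1 - 1) * 1 = (t - 1) * (a + x) ^ (t - 2) := by
      ring_nf
    exact (this ▸ h2).hasDerivWithinAt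
  have bound : ∀ x ∈ Icc (0:ℝ) b, ‖(t - 1) * (a + x) ^ (t - 2)‖ ≤ 4 * a ^ (t - 2) := by
    intro x hx
    rw [Real.norm_eq_abs, abs_mul, abs_of_nonneg (by linarith : (0:ℝ) ≤ t - 1),
      abs_of_nonneg (Real.rpow_nonneg (by linarith [hx.1] : (0:ℝ) ≤ a + x) _)]
    have h1 : (a + x) ^ (t - 2) ≤ 2 * a ^ (t - 2) :=
      pow_base_bound ht1 ht3 ha hx.1 (le_trans hx.2 hba)
    nlinarith [Real.rpow_pos_of_pos ha (t - 2), Real.rpow_nonneg (show (0:ℝ) ≤ a + x by linarith [hx.1]) (t-2)]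
  have := (convex_Icc (0:ℝ) b).norm_image_sub_le_of_norm_hasDerivWithin_le key bound
    ⟨le_refl 0, hb.le⟩ hs
  simpa [Real.norm_eq_abs, abs_of_nonneg hs.1] using this

private lemma step2 {t a b : ℝ} (ht1 : 1 ≤ t) (ht3 : t ≤ 3) (ha : 0 < a) (hb : 0 < b)
    (hba : b ≤ a) :
    |(a + b) ^ t - a ^ t - t * a ^ (t - 1) * b| ≤ 12 * a ^ (t - 2) * b ^ (2:ℝ) := by
  set ψ : ℝ → ℝ := fun s => (a + s) ^ t - t * a ^ (t - 1) * s with hψ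
  have key : ∀ x ∈ Icc (0:ℝ) b, HasDerivWithinAt ψ
      (t * (a + x) ^ (t - 1) - t * a ^ (t - 1)) (Icc (0:ℝ) b) x := by
    intro x hx
    have hax : a + x ≠ 0 := by have := hx.1; positivity
    have h1 : HasDerivAt (fun u : ℝ => a + u) 1 x := (hasDerivAt_id x).const_add a
    have h2 := (Real.hasDerivAt_rpow_const (p := t) (Or.inl hax)).comp x h1
    have h3 : HasDerivAt (fun s : ℝ => t * a ^ (t - 1) * s) (t * a ^ (t - 1)) x := by
      simpa using (hasDerivAt_id x).const_mul (t * a ^ (t - 1))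
    have h4 := h2.sub h3
    have : t * (a + x) ^ (t - 1) * 1 - t * a ^ (t - 1)
        = t * (a + x) ^ (t - 1) - t * a ^ (t - 1) := by ring
    exact (this ▸ h4).hasDerivWithinAt
  have bound : ∀ x ∈ Icc (0:ℝ) b,
      ‖t * (a + x) ^ (t - 1) - t * a ^ (t - 1)‖ ≤ 12 * a ^ (t - 2) * b := by
    intro x hx
    have h1 := step1 ht1 ht3 ha hb hba x hx
    rw [Real.norm_eq_abs]
    have : t * (a + x) ^ (t - 1) - t * a ^ (t - 1) = t * ((a + x) ^ (t - 1) - a ^ (t - 1)) := by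
      ring
    rw [this, abs_mul, abs_of_nonneg (by linarith : (0:ℝ) ≤ t)]
    have ha2 := Real.rpow_pos_of_pos ha (t - 2)
    nlinarith [abs_nonneg ((a + x) ^ (t - 1) - a ^ (t - 1)), hx.1, hx.2]
  have := (convex_Icc (0:ℝ) b).norm_image_sub_le_of_norm_hasDerivWithin_le key bound
    ⟨le_refl 0, hb.le⟩ ⟨hb.le, le_refl b⟩
  simp only [Real.norm_eq_abs, sub_zero, hψ] at this
  rw [abs_of_nonneg hb.le] at this
  simp only [add_zero, mul_zero, sub_zero] at this
  have hb2 : b ^ (2:ℝ) = b * b := by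
    rw [show (2:ℝ) = 1 + 1 by norm_num, Real.rpow_add hb, Real.rpow_one]
  have heq : (a + b) ^ t - a ^ t - t * a ^ (t - 1) * b
      = (a + b) ^ t - t * a ^ (t - 1) * b - a ^ t := by ring
  rw [heq, hb2]
  calc |(a + b) ^ t - t * a ^ (t - 1) * b - a ^ t|
      ≤ 12 * a ^ (t - 2) * b * b := this
    _ = 12 * a ^ (t - 2) * (b * b) := by ring

private lemma key_lemma {t : ℝ} (ht1 : 1 ≤ t) (ht3 : t ≤ 3) (a b : ℝ) (ha : 0 < a)
    (hb : 0 < b) (hba : b ≤ a) :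
    |(a + b) ^ t - a ^ t - b ^ t - t * a * b * (a ^ (t - 2) + b ^ (t - 2))| ≤
      16 * a * b ^ (t - 1) := by
  have hcancel : t * a * b * (a ^ (t - 2) + b ^ (t - 2))
      = t * a ^ (t - 1) * b + t * a * b ^ (t - 1) := by
    have h1 : a ^ (t - 1) = a ^ (t - 2) * a := by
      rw [← Real.rpow_add_one ha.ne' (t - 2)]; ring_nf
    have h2 : b ^ (t - 1) = b ^ (t - 2) * b := by
      rw [← Real.rpow_add_one hb.ne' (t - 2)]; ring_nf
    rw [h1, h2]; ring
  have hE : (a + b) ^ t - a ^ t - b ^ t - t * a * b * (a ^ (t - 2) + b ^ (t - 2))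
      = ((a + b) ^ t - a ^ t - t * a ^ (t - 1) * b) - b ^ t - t * a * b ^ (t - 1) := by
    rw [hcancel]; ring
  have h2 := step2 ht1 ht3 ha hb hba
  -- bounds for the pieces
  have hb1 : b ^ t ≤ a * b ^ (t - 1) := by
    have : b ^ t = b * b ^ (t - 1) := by
      rw [mul_comm, ← Real.rpow_add_one hb.ne' (t - 1)]; norm_num
    rw [this]
    exact mul_le_mul_of_nonneg_right hba (Real.rpow_nonneg hb.le _)
  have hb2 : 12 * a ^ (t - 2) * b ^ (2:ℝ) ≤ 12 * (a * b ^ (t - 1)) := by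
    have key : a ^ (t - 2) * b ^ (2:ℝ) ≤ a * b ^ (t - 1) := by
      have e1 : b ^ (2:ℝ) = b ^ (3 - t) * b ^ (t - 1) := by
        rw [← Real.rpow_add hb]; norm_num
      have e2 : a ^ (t - 2) * b ^ (3 - t) ≤ a ^ (t - 2) * a ^ (3 - t) :=
        mul_le_mul_of_nonneg_left (Real.rpow_le_rpow hb.le hba (by linarith))
          (Real.rpow_nonneg ha.le _)
      have e3 : a ^ (t - 2) * a ^ (3 - t) = a := by
        rw [← Real.rpow_add ha]; norm_num
      calc a ^ (t - 2) * b ^ (2:ℝ) = a ^ (t - 2) * b ^ (3 - t) * b ^ (t - 1) := by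
            rw [e1]; ring
        _ ≤ a * b ^ (t - 1) := by
            calc a ^ (t - 2) * b ^ (3 - t) * b ^ (t - 1)
            ≤ a ^ (t - 2) * a ^ (3 - t) * b ^ (t - 1) :=
              mul_le_mul_of_nonneg_right e2 (Real.rpow_nonneg hb.le _)
          _ = a * b ^ (t - 1) := by rw [e3]
    linarith
  have htab : t * a * b ^ (t - 1) ≤ 3 * (a * b ^ (t - 1)) := by
    have h := Real.rpow_nonneg hb.le (t - 1)
    nlinarith [mul_nonneg (mul_nonneg (show (0:ℝ) ≤ 3 - t by linarith) ha.le) h]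
  have habs := abs_sub_abs_le_abs_sub ((a + b) ^ t - a ^ t - t * a ^ (t - 1) * b) 0
  rw [hE]
  have hbt : (0:ℝ) ≤ b ^ t := Real.rpow_nonneg hb.le t
  have htab' : (0:ℝ) ≤ t * a * b ^ (t - 1) := by positivity
  calc |((a + b) ^ t - a ^ t - t * a ^ (t - 1) * b) - b ^ t - t * a * b ^ (t - 1)|
      ≤ |(a + b) ^ t - a ^ t - t * a ^ (t - 1) * b| + b ^ t + t * a * b ^ (t - 1) := by
        have := abs_sub ((a + b) ^ t - a ^ t - t * a ^ (t - 1) * b - b ^ t) (t * a * b ^ (t - 1))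
        have h' := abs_sub ((a + b) ^ t - a ^ t - t * a ^ (t - 1) * b) (b ^ t)
        calc |((a + b) ^ t - a ^ t - t * a ^ (t - 1) * b) - b ^ t - t * a * b ^ (t - 1)|
            ≤ |((a + b) ^ t - a ^ t - t * a ^ (t - 1) * b) - b ^ t| + |t * a * b ^ (t - 1)| :=
              abs_sub _ _
          _ ≤ |(a + b) ^ t - a ^ t - t * a ^ (t - 1) * b| + |b ^ t| + |t * a * b ^ (t - 1)| := by
              linarith [abs_sub ((a + b) ^ t - a ^ t - t * a ^ (t - 1) * b) (b ^ t)]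
          _ = |(a + b) ^ t - a ^ t - t * a ^ (t - 1) * b| + b ^ t + t * a * b ^ (t - 1) := by
              rw [abs_of_nonneg hbt, abs_of_nonneg htab']
    _ ≤ 12 * (a * b ^ (t - 1)) + a * b ^ (t - 1) + 3 * (a * b ^ (t - 1)) := by
        linarith
    _ = 16 * a * b ^ (t - 1) := by ring

/-- For `1 ≤ t ≤ 3` there is `C > 0` (depending only on `t`) such that for all `a, b > 0`,
`|(a+b)^t − a^t − b^t − t a b (a^{t-2} + b^{t-2})| ≤ C a b^{t-1}` when `a ≥ b`, and
`≤ C b a^{t-1}` when `a ≤ b`. -/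
theorem stmt1 (t : ℝ) (ht1 : 1 ≤ t) (ht3 : t ≤ 3) :
    ∃ C : ℝ, 0 < C ∧ ∀ a b : ℝ, 0 < a → 0 < b →
      ((b ≤ a →
          |(a + b) ^ t - a ^ t - b ^ t - t * a * b * (a ^ (t - 2) + b ^ (t - 2))| ≤
            C * a * b ^ (t - 1)) ∧
       (a ≤ b →
          |(a + b) ^ t - a ^ t - b ^ t - t * a * b * (a ^ (t - 2) + b ^ (t - 2))| ≤
            C * b * a ^ (t - 1))) := by
  refine ⟨16, by norm_num, fun a b ha hb => ⟨fun hba => key_lemma ht1 ht3 a b ha hb hba,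
    fun hab => ?_⟩⟩
  have := key_lemma ht1 ht3 b a hb ha hab
  have hsym : (b + a) ^ t - b ^ t - a ^ t - t * b * a * (b ^ (t - 2) + a ^ (t - 2))
      = (a + b) ^ t - a ^ t - b ^ t - t * a * b * (a ^ (t - 2) + b ^ (t - 2)) := by
    rw [add_comm b a]; ring
  rw [hsym] at this
  exact this
end

section
/- Let t ≥ 3 be a real number. Then for every real a ≥ 0 one has (1+a)^t ≥ 1 + a^t + t·a + t·a^{t-1}. -/
open Real Finset

/-!
For `a ≤ 1` the bound follows from the third-order truncation of the binomial series,
`(1 + a)^t ≥ 1 + t a + C(t,2) a² + C(t,3) a³`, valid for `t ≥ 3`: since `C(t,2) ≥ t`,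
`C(t,3) ≥ 1`, and `a^{t-1} ≤ a²`, `a^t ≤ a³`, it dominates the four terms. The truncation bound
is proved for every order `n ≤ t` by induction on `n`, differentiating in `a`.
For `a ≥ 1` multiply the case `a⁻¹ ≤ 1` by `a^t`: both sides are invariant under this symmetry.
-/

theorem le_of_hasDerivAt_le_of_nonneg {f g f' g' : ℝ → ℝ}
    (hf : ∀ x, 0 ≤ x → HasDerivAt f (f' x) x) (hg : ∀ x, 0 ≤ x → HasDerivAt g (g' x) x)
    (h₀ : f 0 ≤ g 0) (hle : ∀ x, 0 ≤ x → f' x ≤ g' x) {a : ℝ} (ha : 0 ≤ a) : f a ≤ g a :=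
  image_le_of_deriv_right_le_deriv_boundary
    (fun x hx => (hf x hx.1).continuousAt.continuousWithinAt)
    (fun x hx => (hf x hx.1).hasDerivWithinAt) h₀
    (fun x hx => (hg x hx.1).continuousAt.continuousWithinAt)
    (fun x hx => (hg x hx.1).hasDerivWithinAt) (fun x hx => hle x hx.1) ⟨ha, le_rfl⟩

theorem succ_mul_choose_succ (r : ℝ) (k : ℕ) :
    (k + 1) * Ring.choose r (k + 1) = r * Ring.choose (r - 1) k := by
  simpa [Ring.choose_one_right, nsmul_eq_mul] using
    Ring.choose_smul_choose r (Nat.le_add_left 1 k)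

theorem choose_two (t : ℝ) : Ring.choose t 2 = t * (t - 1) / 2 := by
  have := succ_mul_choose_succ t 1
  norm_num [Ring.choose_one_right] at this
  linarith

theorem choose_three (t : ℝ) : Ring.choose t 3 = t * (t - 1) * (t - 2) / 6 := by
  have := succ_mul_choose_succ t 2
  rw [choose_two] at this
  norm_num at this
  linarith

theorem hasDerivAt_sum_range_mul_pow (c : ℕ → ℝ) (n : ℕ) (x : ℝ) :
    HasDerivAt (fun x => ∑ k ∈ range (n + 2), c k * x ^ k)
      (∑ k ∈ range (n + 1), (k + 1) * c (k + 1) * x ^ k) x := by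
  refine (HasDerivAt.fun_sum fun k _ => (hasDerivAt_pow k x).const_mul (c k)).congr_deriv ?_
  rw [sum_range_succ' _ (n + 1)]
  simp only [Nat.cast_add, Nat.cast_one, add_tsub_cancel_right, CharP.cast_eq_zero, zero_tsub,
    pow_zero, mul_one, mul_zero, add_zero]
  exact sum_congr rfl fun k _ => by ring

theorem sum_range_choose_mul_pow_le_one_add_rpow {n : ℕ} {p : ℝ} (hp : n ≤ p) {a : ℝ}
    (ha : 0 ≤ a) : ∑ k ∈ range (n + 1), Ring.choose p k * a ^ k ≤ (1 + a) ^ p := by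
  induction n generalizing p a with
  | zero =>
    simp only [zero_add, range_one, sum_singleton, Ring.choose_zero_right, pow_zero, mul_one]
    exact one_le_rpow (by linarith) (by simpa using hp)
  | succ n ih =>
    have hp₀ : 0 < p := by push_cast at hp; linarith
    refine le_of_hasDerivAt_le_of_nonneg (fun x _ => hasDerivAt_sum_range_mul_pow _ n x)
      (g := fun x => (1 + x) ^ p) (g' := fun x => p * (1 + x) ^ (p - 1)) (fun x hx => ?_)
      (by simp [sum_range_succ']) (fun x hx => ?_) ha
    · simpa using ((hasDerivAt_id x).const_add 1).rpow_const (p := p) (Or.inl (by positivity))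
    · calc ∑ k ∈ range (n + 1), (k + 1) * Ring.choose p (k + 1) * x ^ k
          = p * ∑ k ∈ range (n + 1), Ring.choose (p - 1) k * x ^ k := by
            rw [mul_sum]
            exact sum_congr rfl fun k _ => by rw [succ_mul_choose_succ, mul_assoc]
        _ ≤ p * (1 + x) ^ (p - 1) := by
            gcongr
            exact ih (by push_cast at hp; linarith) hx

-- The terms of index `0, t, 1, t - 1` of the binomial expansion of `(1 + a)^t`.
noncomputable def binomialOuterTerms (t a : ℝ) : ℝ := 1 + a ^ t + t * a + t * a ^ (t - 1)

theorem rpow_mul_inv_rpow_sub_one {a : ℝ} (ha : 0 < a) (t : ℝ) : a ^ t * a⁻¹ ^ (t - 1) = a := by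
  rw [inv_rpow ha.le, rpow_sub_one ha.ne', inv_div, mul_div_cancel₀ _ (rpow_pos_of_pos ha t).ne']

theorem rpow_mul_one_add_inv_rpow {a : ℝ} (ha : 0 < a) (t : ℝ) :
    a ^ t * (1 + a⁻¹) ^ t = (1 + a) ^ t := by
  rw [← mul_rpow ha.le (by positivity), mul_add, mul_one, mul_inv_cancel₀ ha.ne', add_comm]

theorem rpow_mul_binomialOuterTerms_inv {a : ℝ} (ha : 0 < a) (t : ℝ) :
    a ^ t * binomialOuterTerms t a⁻¹ = binomialOuterTerms t a := by
  have h₁ : a ^ t * a⁻¹ ^ t = 1 := by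
    rw [← mul_rpow ha.le (inv_nonneg.2 ha.le), mul_inv_cancel₀ ha.ne', one_rpow]
  have h₂ : a ^ t * a⁻¹ = a ^ (t - 1) := by rw [rpow_sub_one ha.ne', div_eq_mul_inv]
  unfold binomialOuterTerms
  linear_combination h₁ + t * h₂ + t * rpow_mul_inv_rpow_sub_one ha t

theorem binomialOuterTerms_le_one_add_rpow_of_le_one {t a : ℝ} (ht : 3 ≤ t) (ha : 0 ≤ a)
    (ha₁ : a ≤ 1) : binomialOuterTerms t a ≤ (1 + a) ^ t := by
  have h₃ : a ^ t ≤ a ^ 3 := by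
    exact_mod_cast rpow_le_rpow_of_exponent_ge' ha ha₁ (by norm_num) ht
  have h₂ : t * a ^ (t - 1) ≤ t * a ^ 2 := by
    gcongr
    exact_mod_cast rpow_le_rpow_of_exponent_ge' (z := 2) ha ha₁ (by norm_num) (by linarith)
  have hc₂ : t * a ^ 2 ≤ t * (t - 1) / 2 * a ^ 2 := by gcongr; nlinarith
  have hc₃ : a ^ 3 ≤ t * (t - 1) * (t - 2) / 6 * a ^ 3 :=
    le_mul_of_one_le_left (by positivity)
      (by nlinarith [mul_le_mul ht ht (by norm_num) (by linarith)])
  have hbin := sum_range_choose_mul_pow_le_one_add_rpow (n := 3) (by exact_mod_cast ht) ha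
  simp only [sum_range_succ, range_zero, sum_empty, Ring.choose_zero_right,
    Ring.choose_one_right, choose_two, choose_three] at hbin
  unfold binomialOuterTerms
  linarith

/-- For `t ≥ 3` and every `a ≥ 0`, `(1+a)^t ≥ 1 + a^t + t a + t a^{t-1}`. -/
theorem stmt2 (t : ℝ) (ht : 3 ≤ t) (a : ℝ) (ha : 0 ≤ a) :
    1 + a ^ t + t * a + t * a ^ (t - 1) ≤ (1 + a) ^ t := by
  show binomialOuterTerms t a ≤ (1 + a) ^ t
  rcases le_total a 1 with ha₁ | ha₁
  · exact binomialOuterTerms_le_one_add_rpow_of_le_one ht ha ha₁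
  · have ha₀ : 0 < a := one_pos.trans_le ha₁
    have hinv := binomialOuterTerms_le_one_add_rpow_of_le_one ht (inv_nonneg.2 ha)
      (inv_le_one_of_one_le₀ ha₁)
    calc binomialOuterTerms t a = a ^ t * binomialOuterTerms t a⁻¹ :=
          (rpow_mul_binomialOuterTerms_inv ha₀ t).symm
      _ ≤ a ^ t * (1 + a⁻¹) ^ t := by gcongr
      _ = (1 + a) ^ t := rpow_mul_one_add_inv_rpow ha₀ t
end

section
/- Let t ≥ 2 be a real number. Then for every real a ≥ 0 one has (1+a)^t ≥ 1 + a^t + t·a. -/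
open Real

/-- For `t ≥ 2` and every `a ≥ 0`, `(1+a)^t ≥ 1 + a^t + t a`. -/
theorem stmt3 (t : ℝ) (ht : 2 ≤ t) (a : ℝ) (ha : 0 ≤ a) :
    1 + a ^ t + t * a ≤ (1 + a) ^ t := by
  have ht1 : (1:ℝ) ≤ t - 1 := by linarith
  rcases le_or_gt a 1 with hle | hgt
  · -- a ≤ 1 : use Bernoulli with exponent t-1 and a^t ≤ a^2 ≤ (t-1)a^2
    have hB : 1 + (t - 1) * a ≤ (1 + a) ^ (t - 1) :=
      one_add_mul_self_le_rpow_one_add (by linarith) ht1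
    have hsplit : (1 + a) ^ t = (1 + a) ^ (t - 1) * (1 + a) := by
      rw [← Real.rpow_add_one (by positivity : (1:ℝ) + a ≠ 0), sub_add_cancel]
    have hat : a ^ t ≤ a ^ (2:ℝ) := by
      rcases eq_or_lt_of_le ha with rfl | hpos
      · simp [Real.zero_rpow, (by linarith : t ≠ 0)]
      · exact Real.rpow_le_rpow_of_exponent_ge hpos hle ht
    have ha2 : a ^ (2:ℝ) = a * a := by
      rw [show (2:ℝ) = ((2:ℕ):ℝ) by norm_num, Real.rpow_natCast]; ring
    have h1a : (0:ℝ) ≤ 1 + a := by linarith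
    rw [ha2] at hat
    rw [hsplit]
    nlinarith [mul_le_mul_of_nonneg_right hB h1a, hat,
      mul_nonneg (by linarith : (0:ℝ) ≤ t - 2) (mul_nonneg ha ha)]
  · -- a > 1 : (1+a)^t = a^t * (1+1/a)^t ≥ a^t (1+1/a)(1+(t-1)/a)
    have ha0 : (0:ℝ) < a := by linarith
    set x : ℝ := a⁻¹ with hx
    have hx0 : 0 < x := by positivity
    have hB : 1 + (t - 1) * x ≤ (1 + x) ^ (t - 1) :=
      one_add_mul_self_le_rpow_one_add (by linarith) ht1
    have hsplit : (1 + x) ^ t = (1 + x) ^ (t - 1) * (1 + x) := by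
      rw [← Real.rpow_add_one (by positivity : (1:ℝ) + x ≠ 0), sub_add_cancel]
    have h2 : (1 + t * x + (t - 1) * x ^ 2) ≤ (1 + x) ^ t := by
      rw [hsplit]
      nlinarith [mul_le_mul_of_nonneg_right hB (by positivity : (0:ℝ) ≤ 1 + x)]
    have hmul : (1 + a) ^ t = a ^ t * (1 + x) ^ t := by
      rw [← Real.mul_rpow ha0.le (by positivity)]
      congr 1
      rw [mul_add, mul_one, hx, mul_inv_cancel₀ ha0.ne']
      ring
    have hatx : a ^ t * x = a ^ (t - 1) := by
      rw [Real.rpow_sub ha0, Real.rpow_one, hx, div_eq_mul_inv]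
    have hatx2 : a ^ t * x ^ 2 = a ^ (t - 2) := by
      rw [Real.rpow_sub ha0, hx, show a ^ (2:ℝ) = a * a by
        rw [show (2:ℝ) = ((2:ℕ):ℝ) by norm_num, Real.rpow_natCast]; ring,
        div_eq_mul_inv, mul_inv, sq]
    have hA1 : a ≤ a ^ (t - 1) := by
      calc a = a ^ (1:ℝ) := (Real.rpow_one a).symm
        _ ≤ a ^ (t - 1) := Real.rpow_le_rpow_of_exponent_le hgt.le ht1
    have hA2 : (1:ℝ) ≤ a ^ (t - 2) := Real.one_le_rpow hgt.le (by linarith)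
    have hfin : a ^ t * (1 + t * x + (t - 1) * x ^ 2) ≤ (1 + a) ^ t := by
      rw [hmul]
      exact mul_le_mul_of_nonneg_left h2 (by positivity)
    have hexp : a ^ t * (1 + t * x + (t - 1) * x ^ 2)
        = a ^ t + t * (a ^ t * x) + (t - 1) * (a ^ t * x ^ 2) := by ring
    rw [hexp, hatx, hatx2] at hfin
    nlinarith [hfin, mul_le_mul_of_nonneg_left hA1 (by linarith : (0:ℝ) ≤ t)]
end

section
/- Let 2 ≤ t < 3 be a real number and let ζ₁ ∈ [t−1, 2]. Then there exists a constant C > 0 such that for every real a ≥ 0 and every θ ∈ [0, 2π]: (1 + a² + 2a·cos θ)^{t/2} ≤ 1 + a^t + t·a·cos θ + C·a^{ζ₁}. -/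
open Real

/-- Weighted AM-GM: for `1 ≤ p ≤ 2` and `u ≥ 0`, `u^p ≤ (2-p)u + (p-1)u²`. -/
lemma aux_rpow_quad (u p : ℝ) (hu : 0 ≤ u) (hp1 : 1 ≤ p) (hp2 : p ≤ 2) :
    u ^ p ≤ (2 - p) * u + (p - 1) * u ^ 2 := by
  rcases eq_or_lt_of_le hu with h0 | h0
  · rw [← h0, Real.zero_rpow (by linarith : p ≠ 0)]
    norm_num
  · have key := Real.geom_mean_le_arith_mean2_weighted (by linarith : (0:ℝ) ≤ 2 - p)
      (by linarith : (0:ℝ) ≤ p - 1) h0.le (sq_nonneg u) (by ring)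
    calc u ^ p = u ^ (2 - p) * (u ^ 2) ^ (p - 1) := by
          rw [← Real.rpow_natCast u 2, ← Real.rpow_mul hu, ← Real.rpow_add h0]
          congr 1
          push_cast
          ring
      _ ≤ (2 - p) * u + (p - 1) * u ^ 2 := key

set_option maxHeartbeats 1000000 in
/-- For `2 ≤ t < 3` and `ζ₁ ∈ [t−1, 2]` there is `C > 0` such that for every `a ≥ 0` and
`θ ∈ [0, 2π]`: `(1 + a² + 2a cos θ)^{t/2} ≤ 1 + a^t + t a cos θ + C a^{ζ₁}`. -/
theorem stmt4 (t ζ₁ : ℝ) (ht2 : 2 ≤ t) (ht3 : t < 3) (hζ1 : t - 1 ≤ ζ₁) (hζ2 : ζ₁ ≤ 2) :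
    ∃ C : ℝ, 0 < C ∧ ∀ a θ : ℝ, 0 ≤ a → θ ∈ Set.Icc (0 : ℝ) (2 * Real.pi) →
      (1 + a ^ 2 + 2 * a * Real.cos θ) ^ (t / 2) ≤
        1 + a ^ t + t * a * Real.cos θ + C * a ^ ζ₁ := by
  refine ⟨9, by norm_num, fun a θ ha hθ => ?_⟩
  set x := Real.cos θ with hxdef
  have hx1 : x ≤ 1 := Real.cos_le_one θ
  have hx2 : -1 ≤ x := Real.neg_one_le_cos θ
  set p := t / 2 with hpdef
  have hp1 : 1 ≤ p := by rw [hpdef]; linarith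
  have hp2 : p ≤ 2 := by rw [hpdef]; linarith
  have hp32 : p < 3 / 2 := by rw [hpdef]; linarith
  have hpt : 2 * p = t := by rw [hpdef]; ring
  set S := 1 + a ^ 2 + 2 * a * x with hSdef
  have hS0 : 0 ≤ S := by nlinarith [sq_nonneg (1 - a), sq_nonneg (1 + a)]
  rcases le_or_gt a 1 with hle | hgt
  · -- small a : quadratic bound directly
    rcases eq_or_lt_of_le ha with h0 | h0
    · have hS1 : S = 1 := by rw [hSdef, ← h0]; ring
      rw [← h0, hS1, Real.one_rpow, Real.zero_rpow (by linarith : t ≠ 0),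
        Real.zero_rpow (by linarith : ζ₁ ≠ 0)]
      norm_num
    · have hc : a ^ 2 ≤ a ^ ζ₁ := by
        rw [← Real.rpow_natCast a 2]
        exact Real.rpow_le_rpow_of_exponent_ge h0 hle (by push_cast; linarith)
      have hat0 : 0 ≤ a ^ t := Real.rpow_nonneg ha t
      have key := aux_rpow_quad S p hS0 hp1 hp2
      refine key.trans ?_
      have h9 : (a + 2 * x) ^ 2 ≤ 9 := by nlinarith
      rw [hSdef, hpdef]
      nlinarith [mul_nonneg (mul_nonneg (by linarith : (0:ℝ) ≤ t / 2 - 1) (sq_nonneg a))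
          (by linarith : (0:ℝ) ≤ 9 - (a + 2 * x) ^ 2),
        mul_nonneg (by linarith : (0:ℝ) ≤ 3 - t) (sq_nonneg a)]
  · -- large a
    have ha0 : (0:ℝ) < a := by linarith
    have ha2 : (0:ℝ) < a ^ 2 := by positivity
    set u := S / a ^ 2 with hudef
    have hu0 : 0 ≤ u := div_nonneg hS0 ha2.le
    have hua : u * a ^ 2 = S := div_mul_cancel₀ S (ne_of_gt ha2)
    set b := a ^ (t - 2) with hbdef
    set c := a ^ ζ₁ with hcdef
    have hb1 : 1 ≤ b := Real.one_le_rpow hgt.le (by linarith)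
    have hbc : b ≤ c := Real.rpow_le_rpow_of_exponent_le hgt.le (by linarith)
    have habc : a * b ≤ c := by
      have h : a * b = a ^ (t - 1) := by
        rw [hbdef]
        nth_rewrite 1 [← Real.rpow_one a]
        rw [← Real.rpow_add ha0]
        congr 1
        ring
      rw [h]
      exact Real.rpow_le_rpow_of_exponent_le hgt.le hζ1
    have hat : a ^ t = b * a ^ 2 := by
      rw [hbdef, ← Real.rpow_natCast a 2, ← Real.rpow_add ha0]
      congr 1
      push_cast
      try ring
    have hat0 : 0 ≤ a ^ t := Real.rpow_nonneg ha t
    have hSp : S ^ p = u ^ p * a ^ t := by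
      rw [← hua, Real.mul_rpow hu0 ha2.le]
      congr 1
      rw [← Real.rpow_natCast a 2, ← Real.rpow_mul ha]
      congr 1
      try push_cast
      try ring
    have hw : a ^ 2 * (u - 1) = 2 * a * x + 1 := by
      have h1 : a ^ 2 * (u - 1) = u * a ^ 2 - a ^ 2 := by ring
      rw [h1, hua, hSdef]; ring
    have hq0 : 0 ≤ a ^ 2 * (u - 1) ^ 2 := by positivity
    have hq : a ^ 2 * (u - 1) ^ 2 ≤ 9 := by
      refine le_of_mul_le_mul_right ?_ ha2
      have hsq : (a ^ 2 * (u - 1)) ^ 2 ≤ 9 * a ^ 2 := by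
        rw [hw]
        nlinarith [mul_nonneg (by nlinarith : (0:ℝ) ≤ 3 * a - 2 * a * x - 1)
          (by nlinarith : (0:ℝ) ≤ 3 * a + 2 * a * x + 1)]
      nlinarith [hsq]
    have key := aux_rpow_quad u p hu0 hp1 hp2
    have step : S ^ p ≤ ((2 - p) * u + (p - 1) * u ^ 2) * a ^ t := by
      rw [hSp]
      exact mul_le_mul_of_nonneg_right key hat0
    refine step.trans ?_
    rw [hat]
    have hexp : ((2 - p) * u + (p - 1) * u ^ 2) * (b * a ^ 2) =
        b * a ^ 2 + p * b * (a ^ 2 * (u - 1)) + (p - 1) * b * (a ^ 2 * (u - 1) ^ 2) := by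
      ring
    rw [hexp, hw]
    have hab1 : 0 ≤ a * (b - 1) := mul_nonneg ha (by linarith)
    have hb0 : (0:ℝ) ≤ b := by linarith
    have htx : t * a * x = 2 * p * a * x := by rw [← hpt]
    nlinarith [htx,
      mul_nonneg (mul_nonneg hab1 (by linarith : (0:ℝ) ≤ 1 - x)) (by linarith : (0:ℝ) ≤ 2 * p),
      mul_nonneg hab1 (by linarith : (0:ℝ) ≤ 3 - 2 * p),
      mul_nonneg (by linarith : (0:ℝ) ≤ 3 / 2 - p) hb0,
      mul_nonneg (mul_nonneg (by linarith : (0:ℝ) ≤ p - 1) hb0)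
        (by linarith : (0:ℝ) ≤ 9 - a ^ 2 * (u - 1) ^ 2),
      habc, hbc, hq0]
end

section
/- Let t ≥ 3 be a real number. Then there exists a constant C > 0 such that for every real a ≥ 0 and every θ ∈ [0, 2π]: (1 + a² + 2a·cos θ)^{t/2} ≤ 1 + a^t + t·a·cos θ + C·(a² + a^{t−1}). -/
open Real

-- exp x ≤ 1 + x * exp x for x ≥ 0
lemma lem_exp0 (x : ℝ) (hx : 0 ≤ x) : Real.exp x ≤ 1 + x * Real.exp x := by
  have h1 := Real.add_one_le_exp (-x)
  have h2 : Real.exp (-x) * Real.exp x = 1 := by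
    rw [← Real.exp_add]; simp
  nlinarith [Real.exp_pos x, Real.exp_pos (-x)]

-- exp x ≤ 1 + x + x^2 * exp x for x ≥ 0
lemma lem_exp1 (x : ℝ) (hx : 0 ≤ x) : Real.exp x ≤ 1 + x + x ^ 2 * Real.exp x := by
  have h0 := lem_exp0 x hx
  nlinarith [Real.exp_pos x, mul_nonneg hx (sub_nonneg.mpr (Real.one_le_exp hx))]

-- exp (-x) ≤ 1 - x + x^2 for x ≥ 0
lemma lem_exp2 (x : ℝ) (hx : 0 ≤ x) : Real.exp (-x) ≤ 1 - x + x ^ 2 := by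
  have h1 := Real.add_one_le_exp x
  have h2 : Real.exp (-x) * Real.exp x = 1 := by rw [← Real.exp_add]; simp
  nlinarith [Real.exp_pos x, Real.exp_pos (-x)]

lemma endpoint_plus (t : ℝ) (ht : 3 ≤ t) (a : ℝ) (ha : 0 ≤ a) :
    ((1 + a) ^ 2 : ℝ) ^ (t / 2) ≤
      1 + a ^ t + t * a + (t ^ 2 * Real.exp t) * (a ^ 2 + a ^ (t - 1)) := by
  have ht0 : (0:ℝ) < t := by linarith
  have h1a : (0:ℝ) ≤ 1 + a := by linarith
  have hrw : ((1 + a) ^ 2 : ℝ) ^ (t / 2) = (1 + a) ^ t := by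
    rw [← Real.rpow_natCast (1 + a) 2, ← Real.rpow_mul h1a]
    congr 1
    push_cast
    ring
  rw [hrw]
  have hat : (0:ℝ) ≤ a ^ t := Real.rpow_nonneg ha t
  have hat1 : (0:ℝ) ≤ a ^ (t - 1) := Real.rpow_nonneg ha _
  have het : (0:ℝ) < Real.exp t := Real.exp_pos t
  rcases le_total a 1 with h | h
  · -- (1+a)^t ≤ exp (a*t) ≤ 1 + t a + (ta)^2 exp(ta) ≤ 1 + t a + t^2 e^t a^2
    have h1 : (1 + a) ^ t ≤ Real.exp (a * t) := by
      rw [Real.exp_mul]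
      exact Real.rpow_le_rpow h1a (by linarith [Real.add_one_le_exp a]) (le_of_lt ht0)
    have h2 := lem_exp1 (a * t) (mul_nonneg ha (le_of_lt ht0))
    have h3 : Real.exp (a * t) ≤ Real.exp t := by
      apply Real.exp_le_exp.mpr; nlinarith
    have h4 := mul_le_mul_of_nonneg_left h3 (sq_nonneg (a*t))
    have h5 : (a*t)^2 ≤ t^2 * a^2 * 1 := by nlinarith
    have h6 : (0:ℝ) ≤ t^2 * Real.exp t * a^(t-1) :=
      mul_nonneg (mul_nonneg (sq_nonneg t) het.le) hat1
    nlinarith [mul_le_mul_of_nonneg_right (show (a*t)^2 ≤ t^2*a^2 by nlinarith) het.le]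
  · -- a ≥ 1
    have ha0 : (0:ℝ) < a := by linarith
    have hfe : (1 + a : ℝ) = a * (1 + 1 / a) := by
      rw [mul_add, mul_one, mul_one_div, div_self ha0.ne', add_comm]
    have h1 : (1 + a) ^ t = a ^ t * (1 + 1 / a) ^ t := by
      rw [hfe, Real.mul_rpow ha (by positivity)]
    have h2 : (1 + 1 / a) ^ t ≤ Real.exp ((1 / a) * t) := by
      rw [Real.exp_mul]
      exact Real.rpow_le_rpow (by positivity) (by linarith [Real.add_one_le_exp (1/a)]) ht0.le
    have h3 := lem_exp0 ((1 / a) * t) (by positivity)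
    have h4 : Real.exp ((1 / a) * t) ≤ Real.exp t := by
      apply Real.exp_le_exp.mpr
      rw [div_mul_eq_mul_div, one_mul, div_le_iff₀ ha0]
      nlinarith
    have h5 : a ^ t * (1 / a) = a ^ (t - 1) := by
      rw [Real.rpow_sub ha0, Real.rpow_one]
      ring
    have h6 : (1 + a) ^ t ≤ a ^ t * (1 + (1 / a) * t * Real.exp t) := by
      rw [h1]
      apply mul_le_mul_of_nonneg_left _ hat
      calc (1 + 1/a) ^ t ≤ Real.exp ((1/a)*t) := h2
        _ ≤ 1 + (1/a)*t * Real.exp ((1/a)*t) := h3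
        _ ≤ 1 + (1/a)*t * Real.exp t := by
            have : (0:ℝ) ≤ (1/a)*t := by positivity
            nlinarith
    have h7 : a ^ t * (1 + (1 / a) * t * Real.exp t) = a ^ t + t * Real.exp t * a ^ (t-1) := by
      have : a ^ t * ((1 / a) * t * Real.exp t) = (a ^ t * (1/a)) * (t * Real.exp t) := by ring
      rw [mul_add, mul_one, this, h5]; ring
    have hC : t * Real.exp t ≤ t ^ 2 * Real.exp t := by
      nlinarith [mul_nonneg (mul_nonneg ht0.le (show (0:ℝ) ≤ t - 1 by linarith)) het.le]
    have h8 := mul_le_mul_of_nonneg_right hC hat1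
    have h9 : (0:ℝ) ≤ t^2 * Real.exp t * a^2 :=
      mul_nonneg (mul_nonneg (sq_nonneg t) het.le) (sq_nonneg a)
    nlinarith [mul_nonneg ht0.le ha]

lemma endpoint_minus (t : ℝ) (ht : 3 ≤ t) (a : ℝ) (ha : 0 ≤ a) :
    ((1 - a) ^ 2 : ℝ) ^ (t / 2) ≤
      1 + a ^ t - t * a + (t ^ 2 * Real.exp t) * (a ^ 2 + a ^ (t - 1)) := by
  have ht0 : (0:ℝ) < t := by linarith
  have hrw : ((1 - a) ^ 2 : ℝ) ^ (t / 2) = |1 - a| ^ t := by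
    rw [← sq_abs, ← Real.rpow_natCast |1 - a| 2, ← Real.rpow_mul (abs_nonneg _)]
    congr 1
    push_cast
    ring
  rw [hrw]
  have hat : (0:ℝ) ≤ a ^ t := Real.rpow_nonneg ha t
  have hat1 : (0:ℝ) ≤ a ^ (t - 1) := Real.rpow_nonneg ha _
  have het : (0:ℝ) < Real.exp t := Real.exp_pos t
  rcases le_total a 1 with h | h
  · have habs : |1 - a| = 1 - a := abs_of_nonneg (by linarith)
    rw [habs]
    have h1 : (1 - a) ^ t ≤ Real.exp (-a * t) := by
      rw [Real.exp_mul]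
      exact Real.rpow_le_rpow (by linarith) (by linarith [Real.add_one_le_exp (-a)]) ht0.le
    have h2 : Real.exp (-(a * t)) ≤ 1 - a * t + (a * t) ^ 2 :=
      lem_exp2 (a * t) (mul_nonneg ha ht0.le)
    rw [show -a * t = -(a * t) by ring] at h1
    have hexp1 : (1:ℝ) ≤ Real.exp t := Real.one_le_exp ht0.le
    have h9 : (0:ℝ) ≤ t^2 * Real.exp t * a^(t-1) :=
      mul_nonneg (mul_nonneg (sq_nonneg t) het.le) hat1
    nlinarith [mul_nonneg (mul_nonneg (sq_nonneg t) (sq_nonneg a)) (sub_nonneg.mpr hexp1)]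
  · have habs : |1 - a| = a - 1 := by rw [abs_sub_comm]; exact abs_of_nonneg (by linarith)
    rw [habs]
    have h1 : (a - 1) ^ t ≤ a ^ t :=
      Real.rpow_le_rpow (by linarith) (by linarith) ht0.le
    have hexp1 : (1:ℝ) ≤ Real.exp t := Real.one_le_exp ht0.le
    -- need t*a ≤ 1 + t^2 e^t a^2 given a ≥ 1
    have h9 : (0:ℝ) ≤ t^2 * Real.exp t * a^(t-1) :=
      mul_nonneg (mul_nonneg (sq_nonneg t) het.le) hat1
    have h10 : t * a ≤ t * a^2 := by nlinarith [mul_nonneg (mul_nonneg ht0.le ha) (sub_nonneg.mpr h)]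
    have h11 : t * a^2 ≤ t^2 * Real.exp t * a^2 := by
      nlinarith [mul_nonneg (sq_nonneg t) (sub_nonneg.mpr hexp1),
        mul_nonneg (mul_nonneg (sq_nonneg t) (sub_nonneg.mpr hexp1)) (sq_nonneg a),
        mul_nonneg (mul_nonneg ht0.le (by linarith : (0:ℝ) ≤ t - 1)) (sq_nonneg a)]
    linarith

/-- For `t ≥ 3` there is `C > 0` such that for every `a ≥ 0` and `θ ∈ [0, 2π]`:
`(1 + a² + 2a cos θ)^{t/2} ≤ 1 + a^t + t a cos θ + C (a² + a^{t−1})`. -/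
theorem stmt5 (t : ℝ) (ht : 3 ≤ t) :
    ∃ C : ℝ, 0 < C ∧ ∀ a θ : ℝ, 0 ≤ a → θ ∈ Set.Icc (0 : ℝ) (2 * Real.pi) →
      (1 + a ^ 2 + 2 * a * Real.cos θ) ^ (t / 2) ≤
        1 + a ^ t + t * a * Real.cos θ + C * (a ^ 2 + a ^ (t - 1)) := by
  refine ⟨t ^ 2 * Real.exp t, by positivity, fun a θ ha _ => ?_⟩
  set c := Real.cos θ with hc
  have hc1 : -1 ≤ c := Real.neg_one_le_cos θ
  have hc2 : c ≤ 1 := Real.cos_le_one θ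
  have hp : 1 ≤ t / 2 := by linarith
  have hconv := convexOn_rpow hp
  have hμ : (0:ℝ) ≤ (1 - c) / 2 := by linarith
  have hlam : (0:ℝ) ≤ (1 + c) / 2 := by linarith
  have hsum : (1 - c) / 2 + (1 + c) / 2 = 1 := by ring
  have hx1 : ((1 - a) ^ 2 : ℝ) ∈ Set.Ici (0:ℝ) := Set.mem_Ici.mpr (by positivity)
  have hx2 : ((1 + a) ^ 2 : ℝ) ∈ Set.Ici (0:ℝ) := Set.mem_Ici.mpr (by positivity)
  have hkey := hconv.2 hx1 hx2 hμ hlam hsum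
  simp only [smul_eq_mul] at hkey
  have hcomb : (1 - c) / 2 * (1 - a) ^ 2 + (1 + c) / 2 * (1 + a) ^ 2
      = 1 + a ^ 2 + 2 * a * c := by ring
  rw [hcomb] at hkey
  have e1 := endpoint_minus t ht a ha
  have e2 := endpoint_plus t ht a ha
  have hms : (0:ℝ) ≤ ((1 - a) ^ 2 : ℝ) ^ (t / 2) := Real.rpow_nonneg (by positivity) _
  calc (1 + a ^ 2 + 2 * a * c) ^ (t / 2)
      ≤ (1 - c) / 2 * ((1 - a) ^ 2) ^ (t / 2) + (1 + c) / 2 * ((1 + a) ^ 2) ^ (t / 2) := hkey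
    _ ≤ (1 - c) / 2 * (1 + a ^ t - t * a + (t ^ 2 * Real.exp t) * (a ^ 2 + a ^ (t - 1)))
        + (1 + c) / 2 * (1 + a ^ t + t * a + (t ^ 2 * Real.exp t) * (a ^ 2 + a ^ (t - 1))) := by
        gcongr
    _ = 1 + a ^ t + t * a * c + (t ^ 2 * Real.exp t) * (a ^ 2 + a ^ (t - 1)) := by ring
end

section
/- Let N be a positive integer, let 1 < p < N, α > 0, t > 0, K > 0, r > 0 be real numbers, and let y ∈ ℝ^N. For ε > 0 define the scaled Talenti-type function V_ε(x) = K · ε^{α(N−p)/(p(p−1))} / ( ε^{αp/(p−1)} + |x−y|^{p/(p−1)} )^{(N−p)/p}. Then there exists a constant C > 0, independent of ε, such that for every ε with 0 < ε < r^{1/α}: ∫_{B_r(y)} V_ε(x)^t dx ≥ C · ε^{α(N − (N−p)t/p)}. -/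
open Real MeasureTheory

/-!
On the ball of radius `ε^α` around `y` one has `|x - y|^{p/(p-1)} ≤ ε^{αp/(p-1)}`, so the
denominator of `V_ε` is at most twice its value at `y`. Hence `V_ε^t` is bounded below there by
a constant multiple of `ε^{-α(N-p)t/p}`, and the ball itself has volume `ε^{αN}` times the
volume of the unit ball.
-/

theorem mul_measureReal_le_setIntegral_of_subset {X : Type*} [MeasurableSpace X] {μ : Measure X}
    {f : X → ℝ} {s u : Set X} {m : ℝ} (hs : MeasurableSet s) (hμs : μ s ≠ ⊤)
    (hu : MeasurableSet u) (hsu : s ⊆ u) (hf : IntegrableOn f u μ) (hf0 : ∀ x ∈ u, 0 ≤ f x)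
    (hm : ∀ x ∈ s, m ≤ f x) :
    m * μ.real s ≤ ∫ x in u, f x ∂μ :=
  (setIntegral_ge_of_const_le_real hs hμs hm (hf.mono_set hsu)).trans <|
    setIntegral_mono_set hf (ae_restrict_of_forall_mem hu hf0) hsu.eventuallyLE

theorem rpow_mul_rpow_le_rpow_div_add_rpow {K ε a b c t ρ : ℝ} (hK : 0 ≤ K) (hε : 0 < ε)
    (hc : 0 ≤ c) (ht : 0 ≤ t) (hρ0 : 0 ≤ ρ) (hρ : ρ ≤ ε ^ b) :
    (K * 2 ^ (-c)) ^ t * ε ^ ((a - b * c) * t) ≤ (K * ε ^ a / (ε ^ b + ρ) ^ c) ^ t := by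
  have hεb : 0 < ε ^ b := rpow_pos_of_pos hε b
  have hcenter : K * 2 ^ (-c) * ε ^ (a - b * c) = K * ε ^ a / (2 * ε ^ b) ^ c := by
    rw [mul_rpow two_pos.le hεb.le, ← rpow_mul hε.le, rpow_neg two_pos.le, rpow_sub hε]
    field_simp
  have hden : (ε ^ b + ρ) ^ c ≤ (2 * ε ^ b) ^ c := rpow_le_rpow (by positivity) (by linarith) hc
  calc (K * 2 ^ (-c)) ^ t * ε ^ ((a - b * c) * t)
      = (K * ε ^ a / (2 * ε ^ b) ^ c) ^ t := by
        rw [rpow_mul hε.le, ← mul_rpow (by positivity) (by positivity), hcenter]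
    _ ≤ (K * ε ^ a / (ε ^ b + ρ) ^ c) ^ t := by gcongr

theorem addHaar_real_ball_of_pos {E : Type*} [NormedAddCommGroup E] [NormedSpace ℝ E]
    [MeasurableSpace E] [BorelSpace E] [FiniteDimensional ℝ E] (μ : Measure E)
    [μ.IsAddHaarMeasure] (x : E) {r : ℝ} (hr : 0 < r) :
    μ.real (Metric.ball x r) = r ^ Module.finrank ℝ E * μ.real (Metric.ball 0 1) := by
  rw [measureReal_def, Measure.addHaar_ball_of_pos μ x hr, ENNReal.toReal_mul,
    ENNReal.toReal_ofReal (by positivity), measureReal_def]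

theorem stmt14_general (N : ℕ) (p α t K r : ℝ) (hp1 : 1 < p) (hpN : p < (N : ℝ))
    (hα : 0 < α) (ht : 0 < t) (hK : 0 < K) (hr : 0 < r) (y : EuclideanSpace ℝ (Fin N)) :
    ∃ C : ℝ, 0 < C ∧ ∀ ε : ℝ, 0 < ε → ε < r ^ (1 / α) →
      C * ε ^ (α * ((N : ℝ) - ((N : ℝ) - p) * t / p)) ≤
        ∫ x in Metric.ball y r,
          (K * ε ^ (α * ((N : ℝ) - p) / (p * (p - 1))) /
            (ε ^ (α * p / (p - 1)) + ‖x - y‖ ^ (p / (p - 1))) ^ (((N : ℝ) - p) / p)) ^ t := by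
  have hp0 : 0 < p := one_pos.trans hp1
  have hq : 0 < p / (p - 1) := div_pos hp0 (sub_pos.2 hp1)
  have hc : 0 ≤ ((N : ℝ) - p) / p := div_nonneg (sub_pos.2 hpN).le hp0.le
  set B := Metric.ball (0 : EuclideanSpace ℝ (Fin N)) 1
  have hB : 0 < volume.real B :=
    ENNReal.toReal_pos (Metric.measure_ball_pos volume _ one_pos).ne' measure_ball_lt_top.ne
  refine ⟨(K * 2 ^ (-(((N : ℝ) - p) / p))) ^ t * volume.real B, by positivity,
    fun ε hε hεr => ?_⟩
  have hsr : ε ^ α < r := by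
    simpa [← rpow_mul hr.le, hα.ne'] using rpow_lt_rpow hε.le hεr hα
  have hvol : volume.real (Metric.ball y (ε ^ α)) = ε ^ (α * N) * volume.real B := by
    rw [addHaar_real_ball_of_pos volume y (rpow_pos_of_pos hε α), finrank_euclideanSpace_fin,
      ← rpow_natCast, ← rpow_mul hε.le]
  have hexp : α * ((N : ℝ) - ((N : ℝ) - p) * t / p) =
      (α * ((N : ℝ) - p) / (p * (p - 1)) - α * p / (p - 1) * (((N : ℝ) - p) / p)) * t +
        α * N := by
    field_simp [(sub_pos.2 hp1).ne']
    ring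
  rw [hexp, rpow_add hε, mul_mul_mul_comm, mul_comm (volume.real B), ← hvol]
  refine mul_measureReal_le_setIntegral_of_subset measurableSet_ball measure_ball_lt_top.ne
    measurableSet_ball (Metric.ball_subset_ball hsr.le) ?_ (fun x _ => by positivity) ?_
  · refine ((Continuous.locallyIntegrable ?_).integrableOn_isCompact
      (isCompact_closedBall y r)).mono_set Metric.ball_subset_closedBall
    fun_prop (disch := (try intro); first | positivity | exact Or.inr hq.le | (left; positivity))
  · intro x hx
    refine rpow_mul_rpow_le_rpow_div_add_rpow hK.le hε hc ht.le (by positivity) ?_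
    calc ‖x - y‖ ^ (p / (p - 1)) ≤ (ε ^ α) ^ (p / (p - 1)) :=
          rpow_le_rpow (norm_nonneg _) (mem_ball_iff_norm.1 hx).le hq.le
      _ = ε ^ (α * p / (p - 1)) := by rw [← rpow_mul hε.le, mul_div_assoc]

/-- Lower bound for integrals of powers of the scaled Talenti-type functions: there is
`C > 0`, independent of `ε`, with `∫_{B_r(y)} V_ε^t ≥ C ε^{α(N − (N−p)t/p)}` for every
`0 < ε < r^{1/α}`. -/
theorem stmt14 (N : ℕ) (hN : 0 < N) (p α t K r : ℝ) (hp1 : 1 < p) (hpN : p < (N : ℝ))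
    (hα : 0 < α) (ht : 0 < t) (hK : 0 < K) (hr : 0 < r) (y : EuclideanSpace ℝ (Fin N)) :
    ∃ C : ℝ, 0 < C ∧ ∀ ε : ℝ, 0 < ε → ε < r ^ (1 / α) →
      C * ε ^ (α * ((N : ℝ) - ((N : ℝ) - p) * t / p)) ≤
        ∫ x in Metric.ball y r,
          (K * ε ^ (α * ((N : ℝ) - p) / (p * (p - 1))) /
            (ε ^ (α * p / (p - 1)) + ‖x - y‖ ^ (p / (p - 1))) ^ (((N : ℝ) - p) / p)) ^ t :=
  stmt14_general N p α t K r hp1 hpN hα ht hK hr y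
end

section
/- Let 2 ≤ p < 3 be a real number and let ζ₁ ∈ [p−1, 2]. Then there exists a constant C > 0 such that for all real numbers a, b: |a + b|^p ≤ |a|^p + |b|^p + p·|a|^{p−2}·a·b + C·|a|^{p−ζ₁}·|b|^{ζ₁}. -/
open Real

private lemma rpow_mvt {u v q : ℝ} (hu : 0 ≤ u) (huv : u ≤ v) (hq : 1 ≤ q) :
    q * u ^ (q - 1) * (v - u) ≤ v ^ q - u ^ q ∧
      v ^ q - u ^ q ≤ q * v ^ (q - 1) * (v - u) := by
  rcases eq_or_lt_of_le huv with rfl | hlt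
  · simp
  · have hderiv : ∀ x ∈ Set.Ioo u v, HasDerivAt (fun x : ℝ => x ^ q) (q * x ^ (q - 1)) x := by
      intro x _
      exact Real.hasDerivAt_rpow_const (Or.inr hq)
    have hcont : ContinuousOn (fun x : ℝ => x ^ q) (Set.Icc u v) := fun x _ =>
      (Real.hasDerivAt_rpow_const (p := q) (Or.inr hq)).continuousAt.continuousWithinAt
    obtain ⟨c, hc, hceq⟩ :=
      exists_hasDerivAt_eq_slope (fun x : ℝ => x ^ q) (fun x => q * x ^ (q - 1)) hlt hcont hderiv
    have hvu : 0 < v - u := sub_pos.mpr hlt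
    rw [eq_div_iff hvu.ne'] at hceq
    have heq : v ^ q - u ^ q = q * c ^ (q - 1) * (v - u) := by
      simpa using hceq.symm
    have hc1 : u ^ (q - 1) ≤ c ^ (q - 1) := Real.rpow_le_rpow hu hc.1.le (by linarith)
    have hc2 : c ^ (q - 1) ≤ v ^ (q - 1) :=
      Real.rpow_le_rpow (le_trans hu hc.1.le) hc.2.le (by linarith)
    have hq0 : 0 ≤ q := by linarith
    constructor
    · have := mul_le_mul_of_nonneg_right (mul_le_mul_of_nonneg_left hc1 hq0) hvu.le
      linarith
    · have := mul_le_mul_of_nonneg_right (mul_le_mul_of_nonneg_left hc2 hq0) hvu.le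
      linarith

private lemma rpow_shift {A B x y d : ℝ} (hA : 0 < A) (hAB : A ≤ B) (hd : 0 ≤ d) :
    A ^ (x + d) * B ^ y ≤ A ^ x * B ^ (y + d) := by
  have hB : 0 < B := lt_of_lt_of_le hA hAB
  rw [Real.rpow_add hA, Real.rpow_add hB]
  have h1 : A ^ d ≤ B ^ d := Real.rpow_le_rpow hA.le hAB hd
  calc A ^ x * A ^ d * B ^ y = (A ^ x * B ^ y) * A ^ d := by ring
    _ ≤ (A ^ x * B ^ y) * B ^ d := by
        apply mul_le_mul_of_nonneg_left h1
        positivity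
    _ = A ^ x * (B ^ y * B ^ d) := by ring

section core

variable {p ζ₁ : ℝ} (hp2 : 2 ≤ p) (hp3 : p < 3) (hζ1 : p - 1 ≤ ζ₁) (hζ2 : ζ₁ ≤ 2)

include hp2 hp3 hζ1 hζ2

/-- small-`B` product bound: `A^{p-2} B² ≤ A^{p-ζ₁} B^{ζ₁}` for `0 < B ≤ A`. -/
private lemma stmt18_aux_prod {A B : ℝ} (hB : 0 < B) (hBA : B ≤ A) :
    A ^ (p - 2) * (B * B) ≤ A ^ (p - ζ₁) * B ^ ζ₁ := by
  have h := rpow_shift (x := ζ₁) (y := p - 2) (d := 2 - ζ₁) hB hBA (by linarith)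
  have e1 : ζ₁ + (2 - ζ₁) = 2 := by ring
  have e2 : p - 2 + (2 - ζ₁) = p - ζ₁ := by ring
  rw [e1, e2] at h
  have e3 : B ^ (2 : ℝ) = B * B := by
    rw [show (2 : ℝ) = ((2 : ℕ) : ℝ) by norm_num, Real.rpow_natCast]
    ring
  rw [e3] at h
  linarith

/-- same-sign core inequality. -/
private lemma core_same {A B : ℝ} (hA : 0 < A) (hB : 0 < B) :
    (A + B) ^ p ≤ A ^ p + B ^ p + p * A ^ (p - 1) * B
      + 4 * p * (A ^ (p - ζ₁) * B ^ ζ₁) := by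
  have hM : 0 ≤ A ^ (p - ζ₁) * B ^ ζ₁ := by positivity
  have hp0 : (0 : ℝ) < p := by linarith
  rcases le_total B A with hBA | hAB
  · -- B ≤ A
    have h1 := (rpow_mvt (u := A) (v := A + B) (q := p) hA.le (by linarith) (by linarith)).2
    rw [show A + B - A = B by ring] at h1
    have h3 := (rpow_mvt (u := A) (v := A + B) (q := p - 1) hA.le (by linarith)
      (by linarith)).2
    rw [show A + B - A = B by ring, show p - 1 - 1 = p - 2 by ring] at h3
    have h4 : (A + B) ^ (p - 2) ≤ 2 * A ^ (p - 2) := by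
      calc (A + B) ^ (p - 2) ≤ (2 * A) ^ (p - 2) :=
            Real.rpow_le_rpow (by positivity) (by linarith) (by linarith)
        _ = (2 : ℝ) ^ (p - 2) * A ^ (p - 2) := Real.mul_rpow (by norm_num) hA.le
        _ ≤ (2 : ℝ) ^ (1 : ℝ) * A ^ (p - 2) := by
            apply mul_le_mul_of_nonneg_right _ (by positivity)
            exact Real.rpow_le_rpow_of_exponent_le (by norm_num) (by linarith)
        _ = 2 * A ^ (p - 2) := by rw [Real.rpow_one]
    have h5 := stmt18_aux_prod hp2 hp3 hζ1 hζ2 hB hBA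
    have hBp : 0 ≤ B ^ p := by positivity
    calc (A + B) ^ p ≤ A ^ p + p * (A + B) ^ (p - 1) * B := by linarith
      _ ≤ A ^ p + p * (A ^ (p - 1) + (p - 1) * ((A + B) ^ (p - 2)) * B) * B := by
          gcongr
          linarith
      _ ≤ A ^ p + p * (A ^ (p - 1) + (p - 1) * (2 * A ^ (p - 2)) * B) * B := by
          gcongr
          linarith
      _ = A ^ p + p * A ^ (p - 1) * B + 2 * p * (p - 1) * (A ^ (p - 2) * (B * B)) := by ring
      _ ≤ A ^ p + p * A ^ (p - 1) * B + 2 * p * (p - 1) * (A ^ (p - ζ₁) * B ^ ζ₁) := by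
          have h2p : (0:ℝ) ≤ 2 * p * (p - 1) := by nlinarith
          nlinarith [mul_le_mul_of_nonneg_left h5 h2p]
      _ ≤ A ^ p + B ^ p + p * A ^ (p - 1) * B + 4 * p * (A ^ (p - ζ₁) * B ^ ζ₁) := by
          nlinarith [mul_nonneg (mul_nonneg (by linarith : (0:ℝ) ≤ 2 * p) hM)
            (by linarith : (0:ℝ) ≤ 3 - p)]
  · -- A ≤ B
    have h1 := (rpow_mvt (u := B) (v := A + B) (q := p) hB.le (by linarith) (by linarith)).2
    rw [show A + B - B = A by ring] at h1
    have h2 : (A + B) ^ (p - 1) ≤ 4 * B ^ (p - 1) := by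
      calc (A + B) ^ (p - 1) ≤ (2 * B) ^ (p - 1) :=
            Real.rpow_le_rpow (by positivity) (by linarith) (by linarith)
        _ = (2 : ℝ) ^ (p - 1) * B ^ (p - 1) := Real.mul_rpow (by norm_num) hB.le
        _ ≤ (2 : ℝ) ^ (2 : ℝ) * B ^ (p - 1) := by
            apply mul_le_mul_of_nonneg_right _ (by positivity)
            exact Real.rpow_le_rpow_of_exponent_le (by norm_num) (by linarith)
        _ = 4 * B ^ (p - 1) := by
            rw [show ((2:ℝ) : ℝ) ^ (2 : ℝ) = 4 by
              rw [show (2 : ℝ) = ((2 : ℕ) : ℝ) by norm_num, Real.rpow_natCast]; norm_num]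
    have h3 : A * B ^ (p - 1) ≤ A ^ (p - ζ₁) * B ^ ζ₁ := by
      have h := rpow_shift (x := p - ζ₁) (y := p - 1) (d := ζ₁ + 1 - p) hA hAB (by linarith)
      rw [show p - ζ₁ + (ζ₁ + 1 - p) = 1 by ring, show p - 1 + (ζ₁ + 1 - p) = ζ₁ by ring,
        Real.rpow_one] at h
      exact h
    have hAp : 0 ≤ A ^ p := by positivity
    have hA1 : 0 ≤ p * A ^ (p - 1) * B := by positivity
    have h1' : p * (A + B) ^ (p - 1) * A ≤ p * (4 * B ^ (p - 1)) * A := by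
      apply mul_le_mul_of_nonneg_right _ hA.le
      apply mul_le_mul_of_nonneg_left h2 hp0.le
    have h3' : 4 * p * (A * B ^ (p - 1)) ≤ 4 * p * (A ^ (p - ζ₁) * B ^ ζ₁) := by
      apply mul_le_mul_of_nonneg_left h3 (by linarith)
    linarith

/-- opposite-sign core inequality. -/
private lemma core_opp {A B : ℝ} (hA : 0 < A) (hB : 0 < B) :
    |A - B| ^ p ≤ A ^ p + B ^ p - p * A ^ (p - 1) * B
      + 4 * p * (A ^ (p - ζ₁) * B ^ ζ₁) := by
  have hM : 0 ≤ A ^ (p - ζ₁) * B ^ ζ₁ := by positivity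
  have hp0 : (0 : ℝ) < p := by linarith
  rcases le_total B A with hBA | hAB
  · -- B ≤ A
    rw [abs_of_nonneg (by linarith)]
    have l1 := (rpow_mvt (u := A - B) (v := A) (q := p) (by linarith) (by linarith)
      (by linarith)).1
    rw [show A - (A - B) = B by ring] at l1
    have l2 := (rpow_mvt (u := A - B) (v := A) (q := p - 1) (by linarith) (by linarith)
      (by linarith)).2
    rw [show A - (A - B) = B by ring, show p - 1 - 1 = p - 2 by ring] at l2
    have l2' : p * B * (A ^ (p - 1) - (A - B) ^ (p - 1)) ≤
        p * B * ((p - 1) * A ^ (p - 2) * B) := by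
      apply mul_le_mul_of_nonneg_left _ (by positivity)
      linarith
    have h5 := stmt18_aux_prod hp2 hp3 hζ1 hζ2 hB hBA
    have hBp : 0 ≤ B ^ p := by positivity
    have key : (A - B) ^ p ≤ A ^ p - p * A ^ (p - 1) * B
        + p * (p - 1) * (A ^ (p - 2) * (B * B)) := by nlinarith [l1, l2']
    have h5' : p * (p - 1) * (A ^ (p - 2) * (B * B)) ≤
        4 * p * (A ^ (p - ζ₁) * B ^ ζ₁) := by
      have : p * (p - 1) * (A ^ (p - 2) * (B * B)) ≤ p * (p - 1) * (A ^ (p - ζ₁) * B ^ ζ₁) := by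
        apply mul_le_mul_of_nonneg_left h5 (by nlinarith)
      nlinarith [mul_nonneg (mul_nonneg hp0.le hM) (by linarith : (0:ℝ) ≤ 3 - p)]
    linarith
  · -- A ≤ B
    rw [show A - B = -(B - A) by ring, abs_neg, abs_of_nonneg (by linarith)]
    have h1 : (B - A) ^ p ≤ B ^ p :=
      Real.rpow_le_rpow (by linarith) (by linarith) hp0.le
    have h3 : A ^ (p - 1) * B ≤ A ^ (p - ζ₁) * B ^ ζ₁ := by
      have h := rpow_shift (x := p - ζ₁) (y := 1) (d := ζ₁ - 1) hA hAB (by linarith)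
      rw [show p - ζ₁ + (ζ₁ - 1) = p - 1 by ring, show (1 : ℝ) + (ζ₁ - 1) = ζ₁ by ring,
        Real.rpow_one] at h
      exact h
    have hAp : 0 ≤ A ^ p := by positivity
    have h3' : p * (A ^ (p - 1) * B) ≤ p * (A ^ (p - ζ₁) * B ^ ζ₁) :=
      mul_le_mul_of_nonneg_left h3 hp0.le
    nlinarith [mul_nonneg hp0.le hM]

end core

/-- For `2 ≤ p < 3` and `ζ₁ ∈ [p−1, 2]` there is `C > 0` such that for all real `a`, `b`:
`|a + b|^p ≤ |a|^p + |b|^p + p |a|^{p−2} a b + C |a|^{p−ζ₁} |b|^{ζ₁}`. -/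
theorem stmt18 (p ζ₁ : ℝ) (hp2 : 2 ≤ p) (hp3 : p < 3) (hζ1 : p - 1 ≤ ζ₁) (hζ2 : ζ₁ ≤ 2) :
    ∃ C : ℝ, 0 < C ∧ ∀ a b : ℝ,
      |a + b| ^ p ≤
        |a| ^ p + |b| ^ p + p * |a| ^ (p - 2) * a * b + C * |a| ^ (p - ζ₁) * |b| ^ ζ₁ := by
  have hp0 : (0 : ℝ) < p := by linarith
  refine ⟨4 * p, by linarith, fun a b => ?_⟩
  rcases eq_or_ne a 0 with rfl | ha
  · simp only [zero_add, abs_zero]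
    rw [Real.zero_rpow hp0.ne']
    have h1 : 0 ≤ 4 * p * (0 : ℝ) ^ (p - ζ₁) * |b| ^ ζ₁ := by positivity
    nlinarith
  rcases eq_or_ne b 0 with rfl | hb
  · simp only [add_zero, abs_zero]
    rw [Real.zero_rpow hp0.ne', Real.zero_rpow (by linarith : ζ₁ ≠ 0)]
    ring_nf
    simp
  have hA : 0 < |a| := abs_pos.mpr ha
  have hB : 0 < |b| := abs_pos.mpr hb
  have hpow : |a| ^ (p - 2) * |a| = |a| ^ (p - 1) := by
    nth_rewrite 2 [← Real.rpow_one |a|]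
    rw [← Real.rpow_add hA]
    congr 1
    ring
  rcases lt_or_gt_of_ne ha with ha' | ha' <;> rcases lt_or_gt_of_ne hb with hb' | hb'
  · -- a < 0, b < 0
    have key := core_same hp2 hp3 hζ1 hζ2 (A := -a) (B := -b) (by linarith) (by linarith)
    rw [abs_of_neg (by linarith : a + b < 0), abs_of_neg ha', abs_of_neg hb']
    have habs : |a| = -a := abs_of_neg ha'
    rw [habs] at hpow
    have hterm : p * (-a) ^ (p - 2) * a * b = p * (-a) ^ (p - 1) * (-b) := by
      have : p * (-a) ^ (p - 2) * a * b = p * ((-a) ^ (p - 2) * (-a)) * (-b) := by ring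
      rw [this, hpow]
    rw [show -(a + b) = -a + -b by ring]
    linarith [key]
  · -- a < 0, b > 0
    have key := core_opp hp2 hp3 hζ1 hζ2 (A := -a) (B := b) (by linarith) hb'
    rw [abs_of_neg ha', abs_of_pos hb']
    have habs : |a| = -a := abs_of_neg ha'
    rw [habs] at hpow
    have hterm : p * (-a) ^ (p - 2) * a * b = -(p * (-a) ^ (p - 1) * b) := by
      have : p * (-a) ^ (p - 2) * a * b = -(p * ((-a) ^ (p - 2) * (-a)) * b) := by ring
      rw [this, hpow]
    have habsum : |a + b| = |(-a) - b| := by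
      rw [show (-a) - b = -(a + b) by ring, abs_neg]
    rw [habsum]
    linarith [key]
  · -- a > 0, b < 0
    have key := core_opp hp2 hp3 hζ1 hζ2 (A := a) (B := -b) ha' (by linarith)
    rw [abs_of_pos ha', abs_of_neg hb']
    have habs : |a| = a := abs_of_pos ha'
    rw [habs] at hpow
    have hterm : p * a ^ (p - 2) * a * b = -(p * a ^ (p - 1) * (-b)) := by
      have : p * a ^ (p - 2) * a * b = -(p * (a ^ (p - 2) * a) * (-b)) := by ring
      rw [this, hpow]
    have habsum : |a + b| = |a - -b| := by rw [show a - -b = a + b by ring]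
    rw [habsum]
    linarith [key]
  · -- a > 0, b > 0
    have key := core_same hp2 hp3 hζ1 hζ2 (A := a) (B := b) ha' hb'
    rw [abs_of_pos (by linarith : (0:ℝ) < a + b), abs_of_pos ha', abs_of_pos hb']
    have habs : |a| = a := abs_of_pos ha'
    rw [habs] at hpow
    have hterm : p * a ^ (p - 2) * a * b = p * a ^ (p - 1) * b := by
      have : p * a ^ (p - 2) * a * b = p * (a ^ (p - 2) * a) * b := by ring
      rw [this, hpow]
    linarith [key]
end

section
/- Let p ≥ 3 be a real number. Then there exists a constant C > 0 such that for all real numbers a, b: |a + b|^p ≤ |a|^p + |b|^p + p·|a|^{p−2}·a·b + C·( |a|^{p−2}·b² + |a|·|b|^{p−1} ). -/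
set_option maxHeartbeats 1000000

open Real

section Aux
open Set

lemma inner_lip (p : ℝ) (hp : 3 ≤ p) {x : ℝ} (hx : x ∈ Set.Icc (1/2:ℝ) (3/2)) :
    |x ^ (p-1) - 1| ≤ (p-1) * (3/2:ℝ) ^ (p-2) * |x - 1| := by
  have h1 : (1:ℝ) ∈ Set.Icc (1/2:ℝ) (3/2) := by norm_num
  have key := Convex.norm_image_sub_le_of_norm_hasDerivWithin_le
    (f := fun y : ℝ => y ^ (p-1)) (f' := fun y : ℝ => (p-1) * y ^ (p-2))
    (s := Set.Icc (1/2:ℝ) (3/2)) (C := (p-1) * (3/2:ℝ) ^ (p-2))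
    (fun y hy => by
      have : HasDerivAt (fun y : ℝ => y ^ (p-1)) ((p-1) * y ^ (p-1-1)) y :=
        Real.hasDerivAt_rpow_const (Or.inl (by linarith [hy.1]))
      have h2 : p - 1 - 1 = p - 2 := by ring
      rw [h2] at this
      exact this.hasDerivWithinAt)
    (fun y hy => by
      have hy0 : (0:ℝ) ≤ y := by linarith [hy.1]
      have : y ^ (p-2) ≤ (3/2:ℝ) ^ (p-2) :=
        Real.rpow_le_rpow hy0 hy.2 (by linarith)
      have hyp : (0:ℝ) ≤ y ^ (p-2) := Real.rpow_nonneg hy0 _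
      rw [Real.norm_eq_abs, abs_mul, abs_of_nonneg (by linarith : (0:ℝ) ≤ p - 1),
        abs_of_nonneg hyp]
      exact mul_le_mul_of_nonneg_left this (by linarith))
    (convex_Icc _ _) h1 hx
  simpa [Real.one_rpow] using key


lemma taylor_bound (p : ℝ) (hp : 3 ≤ p) {x : ℝ} (hx : x ∈ Set.Icc (1/2:ℝ) (3/2)) :
    x ^ p ≤ 1 + p * (x - 1) + (p * (p-1) * (3/2:ℝ) ^ (p-2)) * (x - 1)^2 := by
  have h1 : (1:ℝ) ∈ Set.Icc (1/2:ℝ) (3/2) := by norm_num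
  have hsub : Set.uIcc x 1 ⊆ Set.Icc (1/2:ℝ) (3/2) := Set.uIcc_subset_Icc hx h1
  have hmem : ∀ y ∈ Set.uIcc x 1, |y - 1| ≤ |x - 1| := by
    intro y hy
    rw [Set.mem_uIcc] at hy
    rcases hy with ⟨h1, h2⟩ | ⟨h1, h2⟩ <;> [skip; skip] <;>
      rw [abs_le] <;> constructor <;> cases abs_cases (x - 1) <;> nlinarith
  have key := Convex.norm_image_sub_le_of_norm_hasDerivWithin_le
    (f := fun y : ℝ => y ^ p - p * y) (f' := fun y : ℝ => p * y ^ (p-1) - p)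
    (s := Set.uIcc x 1) (C := p * (p-1) * (3/2:ℝ) ^ (p-2) * |x - 1|)
    (fun y hy => by
      have hy' := hsub hy
      have hd : HasDerivAt (fun y : ℝ => y ^ p) (p * y ^ (p-1)) y :=
        Real.hasDerivAt_rpow_const (Or.inl (by have := hy'.1; intro h; rw [h] at this; linarith))
      exact ((hd.sub ((hasDerivAt_id y).const_mul p)).congr_deriv (by ring)).hasDerivWithinAt)
    (fun y hy => by
      have := inner_lip p hp (hsub hy)
      have h2 := hmem y hy
      rw [Real.norm_eq_abs]
      calc |p * y ^ (p-1) - p| = p * |y ^ (p-1) - 1| := by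
            rw [show p * y ^ (p-1) - p = p * (y ^ (p-1) - 1) by ring, abs_mul, abs_of_nonneg (by linarith : (0:ℝ) ≤ p)]
          _ ≤ p * ((p-1) * (3/2:ℝ) ^ (p-2) * |y - 1|) :=
            mul_le_mul_of_nonneg_left this (by linarith)
          _ ≤ p * (p-1) * (3/2:ℝ) ^ (p-2) * |x - 1| := by
            have h32 : (0:ℝ) ≤ (3/2:ℝ) ^ (p-2) := Real.rpow_nonneg (by norm_num) _
            nlinarith [mul_nonneg (mul_nonneg (by linarith : (0:ℝ) ≤ p) (by linarith : (0:ℝ) ≤ p - 1)) h32])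
    (convex_uIcc _ _) (Set.right_mem_uIcc) (Set.left_mem_uIcc)
  simp only [Real.norm_eq_abs, Real.one_rpow] at key
  have habs := le_abs_self ((x ^ p - p * x) - (1 - p * 1))
  have hsq : |x - 1| * |x - 1| = (x - 1)^2 := by rw [← abs_mul, abs_of_nonneg] <;> nlinarith [sq_nonneg (x-1)]
  rw [mul_assoc, hsq] at key
  linarith [key, habs]


lemma dom_bound (p : ℝ) (hp : 3 ≤ p) {u t : ℝ} (hu : 0 < u) (ht : |t| ≤ u/2) :
    (u + t) ^ p ≤ u ^ p + p * u ^ (p-1) * t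
      + (p * (p-1) * (3/2:ℝ) ^ (p-2)) * u ^ (p-2) * t^2 := by
  set M := p * (p-1) * (3/2:ℝ) ^ (p-2) with hM
  have hune : u ≠ 0 := hu.ne'
  have h1 := abs_le.1 ht
  have hx : (1 + t/u) ∈ Set.Icc (1/2:ℝ) (3/2) := by
    rw [Set.mem_Icc]
    constructor <;> rw [show (1:ℝ) + t/u = (u+t)/u by field_simp]
    · rw [le_div_iff₀ hu]; linarith
    · rw [div_le_iff₀ hu]; linarith
  have key := taylor_bound p hp hx
  have hut : u + t = u * (1 + t/u) := by field_simp
  rw [hut, Real.mul_rpow hu.le (by linarith [hx.1] : (0:ℝ) ≤ 1 + t/u)]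
  have hupn : (0:ℝ) ≤ u ^ p := Real.rpow_nonneg hu.le p
  have e1 : u ^ p = u ^ (p-1) * u := by
    rw [← Real.rpow_add_one hune (p-1)]; ring_nf
  have e2 : u ^ p = u ^ (p-2) * u^2 := by
    have h2 : (u:ℝ)^(2:ℕ) = u ^ ((2:ℕ):ℝ) := (Real.rpow_natCast u 2).symm
    rw [h2, ← Real.rpow_add hu]; norm_num
  have s1 : u ^ p * (t/u) = u ^ (p-1) * t := by rw [e1]; field_simp
  have s2 : u ^ p * (t/u)^2 = u ^ (p-2) * t^2 := by rw [e2]; field_simp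
  calc u^p * (1+t/u)^p
      ≤ u^p * (1 + p*(1+t/u-1) + M*(1+t/u-1)^2) := mul_le_mul_of_nonneg_left key hupn
    _ = u^p + p*(u^p*(t/u)) + M*(u^p*(t/u)^2) := by ring
    _ = u^p + p*u^(p-1)*t + M*(u^(p-2)*t^2) := by rw [s1, s2]; ring
    _ = u^p + p*u^(p-1)*t + M*u^(p-2)*t^2 := by ring


end Aux

/-- For `p ≥ 3` there is `C > 0` such that for all real `a`, `b`:
`|a + b|^p ≤ |a|^p + |b|^p + p |a|^{p−2} a b + C (|a|^{p−2} b² + |a| |b|^{p−1})`. -/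
theorem stmt19 (p : ℝ) (hp : 3 ≤ p) :
    ∃ C : ℝ, 0 < C ∧ ∀ a b : ℝ,
      |a + b| ^ p ≤
        |a| ^ p + |b| ^ p + p * |a| ^ (p - 2) * a * b +
          C * (|a| ^ (p - 2) * b ^ 2 + |a| * |b| ^ (p - 1)) := by
  set M := p * (p-1) * (3/2:ℝ) ^ (p-2) with hMdef
  have hp0 : (0:ℝ) < p := by linarith
  have h3p : (0:ℝ) < (3:ℝ) ^ p := Real.rpow_pos_of_pos (by norm_num) p
  have h2le : (2:ℝ) ^ (p-2) ≤ (3:ℝ) ^ p := by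
    calc (2:ℝ) ^ (p-2) ≤ (3:ℝ) ^ (p-2) :=
          Real.rpow_le_rpow (by norm_num) (by norm_num) (by linarith)
      _ ≤ (3:ℝ) ^ p := Real.rpow_le_rpow_of_exponent_le (by norm_num) (by linarith)
  have h32le : (3/2:ℝ) ^ (p-2) ≤ (3:ℝ) ^ p := by
    calc (3/2:ℝ) ^ (p-2) ≤ (3:ℝ) ^ (p-2) :=
          Real.rpow_le_rpow (by norm_num) (by norm_num) (by linarith)
      _ ≤ (3:ℝ) ^ p := Real.rpow_le_rpow_of_exponent_le (by norm_num) (by linarith)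
  have h32n : (0:ℝ) ≤ (3/2:ℝ) ^ (p-2) := Real.rpow_nonneg (by norm_num) _
  have hM0 : (0:ℝ) ≤ M := by
    rw [hMdef]
    have h1 : (0:ℝ) ≤ p * (p-1) := by nlinarith
    exact mul_nonneg h1 h32n
  have hMle : M ≤ p * p * (3:ℝ) ^ p := by
    rw [hMdef]
    have a1 : p * (p-1) ≤ p * p := by nlinarith
    have a2 : (0:ℝ) ≤ p * (p-1) := by nlinarith
    exact mul_le_mul a1 h32le h32n (by nlinarith)
  set C := (3:ℝ)^p * (1 + p + p*p) + 2*p with hCdef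
  have hCexp : C = (3:ℝ)^p + (3:ℝ)^p * p + (3:ℝ)^p * (p*p) + 2*p := by rw [hCdef]; ring
  have hppn : (0:ℝ) ≤ (3:ℝ)^p * p := by positivity
  have hpppn : (0:ℝ) ≤ (3:ℝ)^p * (p*p) := by positivity
  have hC0 : (0:ℝ) < C := by rw [hCexp]; linarith [h3p, hppn, hpppn, hp0]
  have hMC : M ≤ C := by
    rw [hCexp]
    have : p * p * (3:ℝ)^p = (3:ℝ)^p * (p*p) := by ring
    linarith [hMle, h3p, hppn, hp0, this.symm ▸ hMle]
  refine ⟨C, hC0, fun a b => ?_⟩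
  have hYn : (0:ℝ) ≤ |a| ^ (p-2) * b^2 :=
    mul_nonneg (Real.rpow_nonneg (abs_nonneg a) _) (sq_nonneg b)
  have hXn : (0:ℝ) ≤ |a| * |b| ^ (p-1) :=
    mul_nonneg (abs_nonneg a) (Real.rpow_nonneg (abs_nonneg b) _)
  have hapn : (0:ℝ) ≤ |a| ^ p := Real.rpow_nonneg (abs_nonneg a) _
  have hbpn : (0:ℝ) ≤ |b| ^ p := Real.rpow_nonneg (abs_nonneg b) _
  have hCY : (0:ℝ) ≤ C * (|a| ^ (p-2) * b^2) := mul_nonneg hC0.le hYn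
  have hCX : (0:ℝ) ≤ C * (|a| * |b| ^ (p-1)) := mul_nonneg hC0.le hXn
  have hCsplit : C * (|a| ^ (p - 2) * b ^ 2 + |a| * |b| ^ (p - 1))
      = C * (|a| ^ (p-2) * b^2) + C * (|a| * |b| ^ (p-1)) := by ring
  rcases lt_or_ge (2*|b|) (|a|) with hcase1 | hcase1
  · -- a dominant
    have ha : a ≠ 0 := by
      intro h; rw [h, abs_zero] at hcase1; have := abs_nonneg b; linarith
    have hA : (0:ℝ) < |a| := abs_pos.2 ha
    set t := a * b / |a| with htdef
    have htabs : |t| = |b| := by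
      rw [htdef, abs_div, abs_abs, abs_mul]; field_simp
    have hid : |a + b| = |a| + t := by
      rcases ha.lt_or_gt with h | h
      · have ht' : t = -b := by
          rw [htdef, abs_of_neg h, div_neg, mul_comm, mul_div_assoc,
            div_self (ne_of_lt h), mul_one]
        have hab : a + b < 0 := by
          rw [abs_of_neg h] at hcase1; cases abs_cases b <;> linarith
        rw [abs_of_neg h, abs_of_neg hab, ht']; ring
      · have ht' : t = b := by
          rw [htdef, abs_of_pos h, mul_comm, mul_div_assoc,
            div_self (ne_of_gt h), mul_one]
        have hab : 0 < a + b := by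
          rw [abs_of_pos h] at hcase1; cases abs_cases b <;> linarith
        rw [abs_of_pos h, abs_of_pos hab, ht']
    have key := dom_bound p hp hA (by rw [htabs]; linarith)
    rw [hid]
    have e1 : p * |a| ^ (p-1) * t = p * |a| ^ (p-2) * a * b := by
      rw [show p - 1 = (p-2) + 1 by ring, Real.rpow_add_one (abs_ne_zero.2 ha), htdef]
      field_simp
    have e2 : t^2 = b^2 := by
      rw [htdef, div_pow, mul_pow, sq_abs]
      field_simp [pow_ne_zero 2 ha]
    rw [e1, e2] at key
    have hMY : M * (|a| ^ (p-2) * b^2) ≤ C * (|a| ^ (p-2) * b^2) :=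
      mul_le_mul_of_nonneg_right hMC hYn
    rw [hCsplit]
    have key' : (|a| + t)^p ≤ |a|^p + p * |a|^(p-2) * a * b + M * (|a|^(p-2) * b^2) := by
      rw [hMdef]; linarith [key]
    linarith
  · rcases lt_or_ge (2*|a|) (|b|) with hcase2 | hcase2
    · -- b dominant
      have hb : b ≠ 0 := by
        intro h; rw [h, abs_zero] at hcase2; have := abs_nonneg a; linarith
      have hB : (0:ℝ) < |b| := abs_pos.2 hb
      set t := a * b / |b| with htdef
      have htabs : |t| = |a| := by
        rw [htdef, abs_div, abs_abs, abs_mul]; field_simp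
      have hid : |a + b| = |b| + t := by
        rcases hb.lt_or_gt with h | h
        · have ht' : t = -a := by
            rw [htdef, abs_of_neg h, div_neg, mul_div_assoc,
              div_self (ne_of_lt h), mul_one]
          have hab : a + b < 0 := by
            rw [abs_of_neg h] at hcase2; cases abs_cases a <;> linarith
          rw [abs_of_neg h, abs_of_neg hab, ht']; ring
        · have ht' : t = a := by
            rw [htdef, abs_of_pos h, mul_div_assoc,
              div_self (ne_of_gt h), mul_one]
          have hab : 0 < a + b := by
            rw [abs_of_pos h] at hcase2; cases abs_cases a <;> linarith
          rw [abs_of_pos h, abs_of_pos hab, ht']; ring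
      have key := dom_bound p hp hB (by rw [htabs]; linarith)
      rw [hid]
      have hB1 : |b| ^ (p-1) = |b| ^ (p-2) * |b| := by
        rw [show p - 1 = (p-2) + 1 by ring, Real.rpow_add_one (abs_ne_zero.2 hb)]
      have ht_le : t ≤ |a| := by rw [← htabs]; exact le_abs_self t
      have hBp2 : (0:ℝ) ≤ |b| ^ (p-2) := Real.rpow_nonneg (abs_nonneg b) _
      have hBp1 : (0:ℝ) ≤ |b| ^ (p-1) := Real.rpow_nonneg (abs_nonneg b) _
      have e1 : p * |b| ^ (p-1) * t ≤ p * (|a| * |b| ^ (p-1)) := by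
        have := mul_le_mul_of_nonneg_left ht_le (mul_nonneg hp0.le hBp1)
        linarith [this]
      have e2 : M * |b| ^ (p-2) * t^2 ≤ M * (|a| * |b| ^ (p-1)) := by
        have ht2 : t^2 ≤ |a| * |b| := by
          have h7 : t^2 = |a|^2 := by rw [← sq_abs t, htabs]
          nlinarith [abs_nonneg a]
        have h5 := mul_le_mul_of_nonneg_left ht2 (mul_nonneg hM0 hBp2)
        have h6 : (M * |b| ^ (p-2)) * (|a| * |b|) = M * (|a| * |b| ^ (p-1)) := by
          rw [hB1]; ring
        linarith [h5, h6.symm ▸ h5]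
      have e3 : -(p * (|a| * |b| ^ (p-1))) ≤ p * |a| ^ (p-2) * a * b := by
        have h1 : |p * |a| ^ (p-2) * a * b| = p * (|a| ^ (p-2) * |a|) * |b| := by
          rw [abs_mul, abs_mul, abs_mul, abs_of_nonneg hp0.le,
            abs_of_nonneg (Real.rpow_nonneg (abs_nonneg a) _)]; ring
        have h2 : |a| ^ (p-2) * |a| ≤ |b| ^ (p-2) * |a| := by
          have : |a| ^ (p-2) ≤ |b| ^ (p-2) :=
            Real.rpow_le_rpow (abs_nonneg a) (by linarith) (by linarith)
          exact mul_le_mul_of_nonneg_right this (abs_nonneg a)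
        have h3 := neg_abs_le (p * |a| ^ (p-2) * a * b)
        rw [h1] at h3
        have h5 := mul_le_mul_of_nonneg_right (mul_le_mul_of_nonneg_left h2 hp0.le) (abs_nonneg b)
        have h4 : p * (|b| ^ (p-2) * |a|) * |b| = p * (|a| * |b| ^ (p-1)) := by
          rw [hB1]; ring
        linarith [h3, h5, h4.symm ▸ le_refl (p * (|b| ^ (p-2) * |a|) * |b|)]
      have hMX : M * (|a| * |b| ^ (p-1)) ≤ C * (|a| * |b| ^ (p-1)) :=
        mul_le_mul_of_nonneg_right hMC hXn
      have key' : (|b| + t)^p ≤ |b|^p + p * (|a| * |b| ^ (p-1)) + M * (|a| * |b| ^ (p-1)) := by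
        rw [hMdef] at e2 ⊢; linarith [key, e1, e2]
      -- C*X ≥ (2p + M) X : from hCexp, C ≥ 3^p p + p p 3^p + 2p ≥ 2p + M... 
      have hC2 : 2*p + M ≤ C := by
        rw [hCexp]
        have h9 : p * p * (3:ℝ)^p = (3:ℝ)^p * (p*p) := by ring
        linarith [hMle, h3p, hppn, h9 ▸ hMle]
      have hC2X := mul_le_mul_of_nonneg_right hC2 hXn
      have hsplit2 : (2*p + M) * (|a| * |b| ^ (p-1))
          = p * (|a| * |b| ^ (p-1)) + p * (|a| * |b| ^ (p-1)) + M * (|a| * |b| ^ (p-1)) := by ring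
      rw [hCsplit]
      linarith [key', e3, hC2X, hapn]
    · -- comparable: |a| ≤ 2|b|, |b| ≤ 2|a|
      rcases eq_or_ne b 0 with hb0 | hb
      · have ha0 : a = 0 := by
          rw [hb0, abs_zero] at hcase1
          exact abs_eq_zero.1 (le_antisymm (by linarith) (abs_nonneg a))
        subst ha0; subst hb0
        simp [Real.zero_rpow hp0.ne']
      · have hB : (0:ℝ) < |b| := abs_pos.2 hb
        have hA : (0:ℝ) < |a| := by linarith
        have hABpos : (0:ℝ) < |a| + |b| := by linarith
        have step1 : |a + b| ^ p ≤ (|a| + |b|) ^ p :=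
          Real.rpow_le_rpow (abs_nonneg _) (abs_add_le a b) hp0.le
        have step2 : (|a| + |b|) ^ p ≤ (3:ℝ)^p * (|a| * |b| ^ (p-1)) := by
          have e : (|a| + |b|) ^ p = (|a| + |b|) ^ (p-1) * (|a| + |b|) := by
            rw [← Real.rpow_add_one hABpos.ne' (p-1)]; norm_num
          rw [e]
          have h1 : (|a| + |b|) ^ (p-1) ≤ (3:ℝ)^(p-1) * |b| ^ (p-1) := by
            rw [← Real.mul_rpow (by norm_num) (abs_nonneg b)]
            exact Real.rpow_le_rpow (by linarith) (by linarith) (by linarith)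
          have h2 : |a| + |b| ≤ 3 * |a| := by linarith
          have h39 : (3:ℝ)^(p-1) * 3 = (3:ℝ)^p := by
            rw [← Real.rpow_add_one (by norm_num : (3:ℝ) ≠ 0) (p-1)]; norm_num
          have h3n : (0:ℝ) ≤ (3:ℝ)^(p-1) * |b| ^ (p-1) := by positivity
          calc (|a| + |b|) ^ (p-1) * (|a| + |b|)
              ≤ ((3:ℝ)^(p-1) * |b| ^ (p-1)) * (3 * |a|) :=
                mul_le_mul h1 h2 hABpos.le h3n
            _ = (3:ℝ)^p * (|a| * |b| ^ (p-1)) := by rw [← h39]; ring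
        have hB1 : |b| ^ (p-1) = |b| ^ (p-2) * |b| := by
          rw [show p - 1 = (p-2) + 1 by ring, Real.rpow_add_one (abs_ne_zero.2 hb)]
        have cross : -((p * (2:ℝ)^(p-2)) * (|a| * |b| ^ (p-1))) ≤ p * |a| ^ (p-2) * a * b := by
          have h1 : |p * |a| ^ (p-2) * a * b| = p * (|a| ^ (p-2) * |a|) * |b| := by
            rw [abs_mul, abs_mul, abs_mul, abs_of_nonneg hp0.le,
              abs_of_nonneg (Real.rpow_nonneg (abs_nonneg a) _)]; ring
          have h2 : |a| ^ (p-2) ≤ (2:ℝ)^(p-2) * |b| ^ (p-2) := by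
            rw [← Real.mul_rpow (by norm_num) (abs_nonneg b)]
            exact Real.rpow_le_rpow (abs_nonneg a) (by linarith) (by linarith)
          have h3 := neg_abs_le (p * |a| ^ (p-2) * a * b)
          rw [h1] at h3
          have h5 := mul_le_mul_of_nonneg_right
            (mul_le_mul_of_nonneg_left (mul_le_mul_of_nonneg_right h2 (abs_nonneg a)) hp0.le)
            (abs_nonneg b)
          have h4 : p * ((2:ℝ)^(p-2) * |b| ^ (p-2) * |a|) * |b|
              = (p * (2:ℝ)^(p-2)) * (|a| * |b| ^ (p-1)) := by
            rw [hB1]; ring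
          linarith [h3, h5, h4 ▸ le_refl (p * ((2:ℝ)^(p-2) * |b| ^ (p-2) * |a|) * |b|)]
        have hCbig : (3:ℝ)^p + p * (2:ℝ)^(p-2) ≤ C := by
          have h8 := mul_le_mul_of_nonneg_left h2le hp0.le
          have h9 : p * (3:ℝ)^p = (3:ℝ)^p * p := by ring
          rw [hCexp]; linarith [h8, hpppn, hp0, h9 ▸ h8]
        have hCbigX := mul_le_mul_of_nonneg_right hCbig hXn
        have hsplit3 : ((3:ℝ)^p + p * (2:ℝ)^(p-2)) * (|a| * |b| ^ (p-1))
            = (3:ℝ)^p * (|a| * |b| ^ (p-1)) + (p * (2:ℝ)^(p-2)) * (|a| * |b| ^ (p-1)) := by ring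
        rw [hCsplit]
        linarith [step1, step2, cross, hCbigX, hapn, hbpn, hCY]
end
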